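/- arXiv:2103.14035 — 3 statements merged into one kernel-verified Lean document; each statement's English description precedes it below -/
import Mathlib

section
/- Let D be a type of databases with a neighboring relation N, let ε > 0 and Δ > 0, and let f : D → ℝ be a query such that |f(d) − f(d')| ≤ Δ for all neighboring d, d'. Then the one-dimensional Laplace mechanism M(d) := the pushforward of the Laplace distribution with scale Δ/ε under translation by f(d) (i.e., the law of f(d) + η with η ~ Lap(Δ/ε)) is ε-differentially private: for all neighboring d, d' and all measurable S ⊆ ℝ, M(d)(S) ≤ exp(ε) · M(d')(S). -/
open MeasureTheory

/-- The Laplace distribution with scale `λ > 0`: the measure on `ℝ` with density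
`x ↦ (1/(2λ))·exp(−|x|/λ)` with respect to Lebesgue measure. -/
noncomputable def laplaceMeasure (lam : ℝ) : Measure ℝ :=
  volume.withDensity fun x => ENNReal.ofReal ((1 / (2 * lam)) * Real.exp (-|x| / lam))

lemma laplace_map_apply (lam : ℝ) (c : ℝ) {S : Set ℝ} (hS : MeasurableSet S) :
    (laplaceMeasure lam).map (fun η => c + η) S
      = ∫⁻ x in S, ENNReal.ofReal ((1 / (2 * lam)) * Real.exp (-|x - c| / lam)) := by
  have hg : Measurable fun x : ℝ =>
      ENNReal.ofReal ((1 / (2 * lam)) * Real.exp (-|x| / lam)) := by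
    fun_prop
  rw [laplaceMeasure, Measure.map_apply (measurable_const_add c) hS,
    withDensity_apply _ ((measurable_const_add c) hS)]
  have hmp : MeasurePreserving (fun x : ℝ => c + x) volume volume :=
    measurePreserving_add_left volume c
  have hemb : MeasurableEmbedding (fun x : ℝ => c + x) :=
    (MeasurableEquiv.addLeft c).measurableEmbedding
  have := hmp.setLIntegral_comp_preimage_emb hemb
    (fun y => ENNReal.ofReal ((1 / (2 * lam)) * Real.exp (-|y - c| / lam))) S
  simpa using this

/-- the one-dimensional Laplace mechanism with scale `Δ/ε`, applied to a
query `f` of sensitivity at most `Δ`, is `ε`-differentially private. -/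
theorem laplace_mechanism_one_dim_dp {D : Type*} (N : D → D → Prop) (ε Δ : ℝ)
    (hε : 0 < ε) (hΔ : 0 < Δ) (f : D → ℝ)
    (hf : ∀ d d', N d d' → |f d - f d'| ≤ Δ) :
    ∀ d d', N d d' → ∀ S : Set ℝ, MeasurableSet S →
      (laplaceMeasure (Δ / ε)).map (fun η => f d + η) S ≤
        ENNReal.ofReal (Real.exp ε) *
          (laplaceMeasure (Δ / ε)).map (fun η => f d' + η) S := by
  intro d d' hN S hS
  have hlam : 0 < Δ / ε := div_pos hΔ hε
  rw [laplace_map_apply _ _ hS, laplace_map_apply _ _ hS, ← lintegral_const_mul]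
  · refine setLIntegral_mono_ae (by fun_prop) (Filter.Eventually.of_forall fun x _ => ?_)
    rw [← ENNReal.ofReal_mul (Real.exp_nonneg _)]
    apply ENNReal.ofReal_le_ofReal
    rw [← mul_assoc, mul_comm (Real.exp ε), mul_assoc]
    have h2 : (0:ℝ) ≤ 1 / (2 * (Δ / ε)) := by positivity
    apply mul_le_mul_of_nonneg_left _ h2
    rw [← Real.exp_add, Real.exp_le_exp]
    have hd : |x - f d'| - |x - f d| ≤ Δ := by
      have := abs_sub_abs_le_abs_sub (x - f d') (x - f d)
      have h1 : |x - f d' - (x - f d)| = |f d - f d'| := by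
        rw [show x - f d' - (x - f d) = -(f d' - f d) by ring, abs_neg, abs_sub_comm]
      nlinarith [hf d d' hN]
    have : -|x - f d| / (Δ / ε) - (-|x - f d'| / (Δ / ε)) ≤ ε := by
      rw [div_sub_div_same, div_le_iff₀ hlam]
      calc -|x - f d| - -|x - f d'| = |x - f d'| - |x - f d| := by ring
        _ ≤ Δ := hd
        _ = ε * (Δ / ε) := by field_simp
    linarith
  · fun_prop
end

section
/- Sequential composition: let M₁ : D → Measure(Ω₁) be ε₁-differentially private and M₂ : D → Measure(Ω₂) be ε₂-differentially private, both with respect to the same neighboring relation N on D, and suppose each M₁(d) and M₂(d) is a σ-finite (e.g., probability) measure. Then the joint mechanism d ↦ (M₁(d)).prod(M₂(d)) mapping into Measure(Ω₁ × Ω₂) is (ε₁ + ε₂)-differentially private with respect to N. -/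
/-!
Differential privacy is the domination of measures `M d ≤ exp ε • M d'` for neighbours
`d, d'`. The product of measures is monotone in each factor and scalars pull out of either
factor, so the two dominations multiply to `exp ε₁ * exp ε₂ = exp (ε₁ + ε₂)`.
-/

open MeasureTheory

/-- A mechanism `M : D → Measure Ω` is `ε`-differentially private with respect to a
neighboring relation `N` if for all neighboring `d, d'` and all measurable `S`,
`M d S ≤ exp ε * M d' S`. -/
def IsDP {D Ω : Type*} [MeasurableSpace Ω] (N : D → D → Prop) (ε : ℝ)
    (M : D → Measure Ω) : Prop :=
  ∀ d d', N d d' → ∀ S : Set Ω, MeasurableSet S →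
    M d S ≤ ENNReal.ofReal (Real.exp ε) * M d' S

theorem isDP_iff_le_smul {D Ω : Type*} [MeasurableSpace Ω] {N : D → D → Prop} {ε : ℝ}
    {M : D → Measure Ω} :
    IsDP N ε M ↔ ∀ d d', N d d' → M d ≤ ENNReal.ofReal (Real.exp ε) • M d' := by
  simp only [IsDP, Measure.le_iff, Measure.smul_apply, smul_eq_mul]

theorem MeasureTheory.Measure.prod_le_smul_prod {α β : Type*} [MeasurableSpace α]
    [MeasurableSpace β] {μ μ' : Measure α} {ν ν' : Measure β} [SFinite ν'] {a b : ENNReal}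
    (hμ : μ ≤ a • μ') (hν : ν ≤ b • ν') : μ.prod ν ≤ (a * b) • μ'.prod ν' :=
  calc μ.prod ν ≤ (a • μ').prod (b • ν') := Measure.prod_mono hμ hν
    _ = (a * b) • μ'.prod ν' := by
      rw [Measure.prod_smul_left, Measure.prod_smul_right, smul_smul]

theorem sequential_composition_dp_general {D Ω₁ Ω₂ : Type*} [MeasurableSpace Ω₁]
    [MeasurableSpace Ω₂] (N : D → D → Prop) (ε₁ ε₂ : ℝ)
    (M₁ : D → Measure Ω₁) (M₂ : D → Measure Ω₂)
    (hσ₂ : ∀ d, SigmaFinite (M₂ d))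
    (h₁ : IsDP N ε₁ M₁) (h₂ : IsDP N ε₂ M₂) :
    IsDP N (ε₁ + ε₂) (fun d => (M₁ d).prod (M₂ d)) := by
  rw [isDP_iff_le_smul] at h₁ h₂ ⊢
  intro d d' hN
  rw [Real.exp_add, ENNReal.ofReal_mul (Real.exp_pos ε₁).le]
  exact Measure.prod_le_smul_prod (h₁ d d' hN) (h₂ d d' hN)

/-- sequential composition. If `M₁` is `ε₁`-DP and `M₂` is `ε₂`-DP with
respect to the same neighboring relation, with σ-finite outputs, then the joint
mechanism `d ↦ (M₁ d).prod (M₂ d)` is `(ε₁ + ε₂)`-DP. -/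
theorem sequential_composition_dp {D Ω₁ Ω₂ : Type*} [MeasurableSpace Ω₁]
    [MeasurableSpace Ω₂] (N : D → D → Prop) (ε₁ ε₂ : ℝ)
    (M₁ : D → Measure Ω₁) (M₂ : D → Measure Ω₂)
    (hσ₁ : ∀ d, SigmaFinite (M₁ d)) (hσ₂ : ∀ d, SigmaFinite (M₂ d))
    (h₁ : IsDP N ε₁ M₁) (h₂ : IsDP N ε₂ M₂) :
    IsDP N (ε₁ + ε₂) (fun d => (M₁ d).prod (M₂ d)) :=
  sequential_composition_dp_general N ε₁ ε₂ M₁ M₂ hσ₂ h₁ h₂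
end

section
/- Parallel composition: let D = D₁ × D₂ with neighboring relation N on D defined by N((a, b), (a', b')) iff (N₁(a, a') and b = b') or (a = a' and N₂(b, b')), where N₁, N₂ are neighboring relations on D₁, D₂ respectively. Let M₁ : D₁ → Measure(Ω₁) be ε₁-differentially private with respect to N₁ and M₂ : D₂ → Measure(Ω₂) be ε₂-differentially private with respect to N₂, with each M₁(a) and M₂(b) a σ-finite (e.g., probability) measure. Then the joint mechanism (a, b) ↦ (M₁(a)).prod(M₂(b)) is max(ε₁, ε₂)-differentially private with respect to N. -/
open MeasureTheory

/-- parallel composition. On the product database `D₁ × D₂`, with the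
neighboring relation changing a record in exactly one component, running `M₁` on the
first part and `M₂` on the second part is `max ε₁ ε₂`-DP. -/
theorem parallel_composition_dp {D₁ D₂ Ω₁ Ω₂ : Type*} [MeasurableSpace Ω₁]
    [MeasurableSpace Ω₂] (N₁ : D₁ → D₁ → Prop) (N₂ : D₂ → D₂ → Prop) (ε₁ ε₂ : ℝ)
    (M₁ : D₁ → Measure Ω₁) (M₂ : D₂ → Measure Ω₂)
    (hσ₁ : ∀ a, SigmaFinite (M₁ a)) (hσ₂ : ∀ b, SigmaFinite (M₂ b))
    (h₁ : IsDP N₁ ε₁ M₁) (h₂ : IsDP N₂ ε₂ M₂) :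
    IsDP (fun p q : D₁ × D₂ => (N₁ p.1 q.1 ∧ p.2 = q.2) ∨ (p.1 = q.1 ∧ N₂ p.2 q.2))
      (max ε₁ ε₂) (fun p => (M₁ p.1).prod (M₂ p.2)) := by
  have := hσ₁; have := hσ₂
  rintro ⟨a, b⟩ ⟨a', b'⟩ (⟨hN, rfl⟩ | ⟨rfl, hN⟩) S hS
  · haveI := hσ₁ a; haveI := hσ₁ a'; haveI := hσ₂ b
    have hle : ENNReal.ofReal (Real.exp ε₁) ≤ ENNReal.ofReal (Real.exp (max ε₁ ε₂)) :=
      ENNReal.ofReal_le_ofReal (Real.exp_le_exp.2 (le_max_left _ _))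
    calc ((M₁ a).prod (M₂ b)) S
        = ∫⁻ x, M₂ b (Prod.mk x ⁻¹' S) ∂(M₁ a) := Measure.prod_apply hS
      _ ≤ ∫⁻ x, M₂ b (Prod.mk x ⁻¹' S) ∂(ENNReal.ofReal (Real.exp ε₁) • M₁ a') := by
          refine lintegral_mono' (Measure.le_intro fun s hs _ => ?_) le_rfl
          simpa using h₁ a a' hN s hs
      _ = ENNReal.ofReal (Real.exp ε₁) * ∫⁻ x, M₂ b (Prod.mk x ⁻¹' S) ∂(M₁ a') :=
          lintegral_smul_measure _ _
      _ = ENNReal.ofReal (Real.exp ε₁) * ((M₁ a').prod (M₂ b)) S := by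
          rw [Measure.prod_apply hS]
      _ ≤ ENNReal.ofReal (Real.exp (max ε₁ ε₂)) * ((M₁ a').prod (M₂ b)) S :=
          mul_le_mul_left hle _
  · haveI := hσ₂ b; haveI := hσ₂ b'; haveI := hσ₁ a
    have hle : ENNReal.ofReal (Real.exp ε₂) ≤ ENNReal.ofReal (Real.exp (max ε₁ ε₂)) :=
      ENNReal.ofReal_le_ofReal (Real.exp_le_exp.2 (le_max_right _ _))
    calc ((M₁ a).prod (M₂ b)) S
        = ∫⁻ y, M₁ a ((fun x => (x, y)) ⁻¹' S) ∂(M₂ b) := Measure.prod_apply_symm hS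
      _ ≤ ∫⁻ y, M₁ a ((fun x => (x, y)) ⁻¹' S) ∂(ENNReal.ofReal (Real.exp ε₂) • M₂ b') := by
          refine lintegral_mono' (Measure.le_intro fun s hs _ => ?_) le_rfl
          simpa using h₂ b b' hN s hs
      _ = ENNReal.ofReal (Real.exp ε₂) * ∫⁻ y, M₁ a ((fun x => (x, y)) ⁻¹' S) ∂(M₂ b') :=
          lintegral_smul_measure _ _
      _ = ENNReal.ofReal (Real.exp ε₂) * ((M₁ a).prod (M₂ b')) S := by
          rw [Measure.prod_apply_symm hS]
      _ ≤ ENNReal.ofReal (Real.exp (max ε₁ ε₂)) * ((M₁ a).prod (M₂ b')) S :=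
          mul_le_mul_left hle _
end
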